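/- For any dyadic rational x ≠ 0, the games *:x and 0 are incomparable modulo the dicot universe in misère play; specifically, * + 0 is a previous-player win while * + *:x is a next-player win under misère play. -/

import Mathlib

universe u

namespace SetTheory

inductive PGame : Type (u + 1)
  | mk : ∀ α β : Type u, (α → PGame) → (β → PGame) → PGame

namespace PGame

def LeftMoves : PGame → Type u
  | mk l _ _ _ => l

def RightMoves : PGame → Type u
  | mk _ r _ _ => r

def moveLeft : ∀ g : PGame, LeftMoves g → PGame
  | mk _l _ L _ => L

def moveRight : ∀ g : PGame, RightMoves g → PGame
  | mk _ _r _ R => R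

instance : Zero PGame := ⟨⟨PEmpty, PEmpty, PEmpty.elim, PEmpty.elim⟩⟩

inductive IsOption : PGame → PGame → Prop
  | moveLeft {x : PGame} (i : x.LeftMoves) : IsOption (x.moveLeft i) x
  | moveRight {x : PGame} (i : x.RightMoves) : IsOption (x.moveRight i) x

def Subsequent : PGame → PGame → Prop :=
  Relation.TransGen IsOption

def neg : PGame → PGame
  | ⟨l, r, L, R⟩ => ⟨r, l, fun i => neg (R i), fun i => neg (L i)⟩

instance : Neg PGame :=
  ⟨neg⟩

def addAux (xl xr : Type u) (fL : xl → PGame.{u} → PGame.{u}) (fR : xr → PGame.{u} → PGame.{u}) :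
    PGame.{u} → PGame.{u}
  | mk yl yr yL yR =>
    mk (xl ⊕ yl) (xr ⊕ yr)
      (Sum.elim (fun i => fL i (mk yl yr yL yR)) (fun i => addAux xl xr fL fR (yL i)))
      (Sum.elim (fun i => fR i (mk yl yr yL yR)) (fun i => addAux xl xr fL fR (yR i)))

def add : PGame.{u} → PGame.{u} → PGame.{u}
  | mk xl xr xL xR => addAux xl xr (fun i => add (xL i)) (fun i => add (xR i))

instance : Add PGame.{u} :=
  ⟨add⟩

def star : PGame.{u} :=
  ⟨PUnit, PUnit, fun _ => 0, fun _ => 0⟩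

end PGame

end SetTheory

open SetTheory

namespace Sprigs

/-- Partizan games (in the lowest universe). -/
abbrev PG : Type 1 := PGame.{0}

/-- Winning predicates moving first under misère play:
`(mw G).1` = Left wins moving first; `(mw G).2` = Right wins moving first. -/
def mw : PG → Prop × Prop
  | PGame.mk α β L R =>
    ((IsEmpty α ∨ ∃ i, ¬ (mw (L i)).2), (IsEmpty β ∨ ∃ j, ¬ (mw (R j)).1))

/-- Winning predicates moving first under normal play. -/
def nw : PG → Prop × Prop
  | PGame.mk _ _ L R => ((∃ i, ¬ (nw (L i)).2), (∃ j, ¬ (nw (R j)).1))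

/-- Outcome classes. -/
inductive Outcome : Type
  | L | R | N | P
deriving DecidableEq

/-- The outcome determined by "Left wins moving first" and "Right wins moving first". -/
noncomputable def outcomeOf (wl wr : Prop) : Outcome :=
  haveI := Classical.propDecidable wl
  haveI := Classical.propDecidable wr
  if wl then (if wr then .N else .L) else (if wr then .R else .P)

/-- Misère-play outcome. -/
noncomputable def mo (G : PG) : Outcome := outcomeOf (mw G).1 (mw G).2

/-- Normal-play outcome. -/
noncomputable def no (G : PG) : Outcome := outcomeOf (nw G).1 (nw G).2

/-- Partial order on outcomes: R < P < L and R < N < L, with P, N incomparable. -/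
def Outcome.le : Outcome → Outcome → Prop
  | .R, _ => True
  | _, .L => True
  | a, b => a = b

def Outcome.lt (a b : Outcome) : Prop := Outcome.le a b ∧ a ≠ b

/-- Dicot games: every subposition has moves for both players or neither. -/
def Dicot : PG → Prop
  | PGame.mk α β L R =>
    ((IsEmpty α ∧ IsEmpty β) ∨ (Nonempty α ∧ Nonempty β)) ∧
      (∀ i, Dicot (L i)) ∧ (∀ j, Dicot (R j))

/-- Ordinal sum `G : H`. -/
def ordSum (G : PG) : PG → PGame
  | PGame.mk α β L R =>
    PGame.mk (G.LeftMoves ⊕ α) (G.RightMoves ⊕ β)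
      (Sum.elim G.moveLeft (fun a => ordSum G (L a)))
      (Sum.elim G.moveRight (fun b => ordSum G (R b)))

/-- Canonical form of a natural number as a game. -/
def natGame : ℕ → PGame
  | 0 => PGame.mk PEmpty PEmpty PEmpty.elim PEmpty.elim
  | n + 1 => PGame.mk PUnit PEmpty (fun _ => natGame n) PEmpty.elim

/-- Canonical form of an integer as a game. -/
def intGame (m : ℤ) : PG := if 0 ≤ m then natGame m.toNat else -natGame (-m).toNat

/-- Canonical form of the dyadic rational `m / 2 ^ n` as a game. -/
def dGame : ℕ → ℤ → PGame
  | 0, m => intGame m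
  | n + 1, m =>
    if m % 2 = 0 then dGame n (m / 2)
    else PGame.mk PUnit PUnit (fun _ => dGame n ((m - 1) / 2)) (fun _ => dGame n ((m + 1) / 2))

/-- A rational number is dyadic if its denominator is a power of two. -/
def IsDyadic (q : ℚ) : Prop := ∃ n : ℕ, q.den = 2 ^ n

/-- The canonical-form game of a dyadic rational. -/
def qGame (q : ℚ) : PG := dGame (Nat.log 2 q.den) q.num

/-- The Sprig `* : x` for a dyadic rational `x`. -/
def sprig (q : ℚ) : PG := ordSum PGame.star (qGame q)

/-- The Sprig `* : x̄` where `x̄` is the conjugate of the dyadic rational `x`. -/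
def sprigNeg (q : ℚ) : PG := ordSum PGame.star (-qGame q)

/-- Disjunctive sum of a list of games. -/
def listSum (l : List PG) : PG := l.foldr (· + ·) 0

/-- The position `(X, Y) = Σ_{x ∈ X} *:x + Σ_{y ∈ Y} *:(-y)`. -/
def sprigsGame (X Y : List ℚ) : PG := listSum (X.map sprig ++ Y.map sprigNeg)

/-- The minimum of a nonempty multiset of rationals (0 for the empty multiset). -/
noncomputable def mmin (s : Multiset ℚ) : ℚ :=
  if h : s = 0 then 0 else
    s.toFinset.min' (by rwa [Multiset.toFinset_nonempty])

/-- The edge `ε` computed from the reduced multisets `X' = X \ Y` and `Y' = Y \ X`. -/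
noncomputable def edge (X Y : Multiset ℚ) : ℚ :=
  if X - Y = 0 ∨ Y - X = 0 then 0 else mmin (X - Y) - mmin (Y - X)

/-- The universe `S` of finite sums of Sprigs (and `*`). -/
inductive InS : PG → Prop
  | star : InS PGame.star
  | sprig {q : ℚ} (h : IsDyadic q) : InS (sprig q)
  | sprigNeg {q : ℚ} (h : IsDyadic q) : InS (sprigNeg q)
  | add {a b : PG} : InS a → InS b → InS (a + b)

/-- A universe: a set of games closed under disjunctive sum and followers. -/
def IsUniverse (S : Set PG) : Prop :=
  (∀ a ∈ S, ∀ b ∈ S, a + b ∈ S) ∧ ∀ a ∈ S, ∀ b, PGame.Subsequent b a → b ∈ S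
/-! In misère play a player with no move wins, so `0` is an N-position and `*` (like `* + 0` and
`0 + *`) is a P-position: either player's only move hands the opponent a position without moves.
The sprig `*:x` keeps the options `0` of `*`, so in `*:x + *` and in `* + *:x` whoever moves first
plays `*:x` to `0` and leaves a P-position. Hence `W = *` separates `*:x` from `0`. -/

open PGame

theorem mo_eq_N_iff {G : PG} : mo G = .N ↔ (mw G).1 ∧ (mw G).2 := by
  unfold mo outcomeOf
  split_ifs <;> simp_all

theorem mo_eq_P_iff {G : PG} : mo G = .P ↔ ¬ (mw G).1 ∧ ¬ (mw G).2 := by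
  unfold mo outcomeOf
  split_ifs <;> simp_all

theorem mk_add_mk {α β γ δ : Type} (L : α → PG) (R : β → PG) (L' : γ → PG) (R' : δ → PG) :
    mk α β L R + mk γ δ L' R' = mk (α ⊕ γ) (β ⊕ δ)
      (Sum.elim (fun i => L i + mk γ δ L' R') (fun i => mk α β L R + L' i))
      (Sum.elim (fun j => R j + mk γ δ L' R') (fun j => mk α β L R + R' j)) :=
  rfl

theorem mw_add_fst {G H : PG} : (mw (G + H)).1 ↔ IsEmpty G.LeftMoves ∧ IsEmpty H.LeftMoves ∨
    (∃ i, ¬ (mw (G.moveLeft i + H)).2) ∨ ∃ i, ¬ (mw (G + H.moveLeft i)).2 := by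
  cases G; cases H
  simp only [mk_add_mk, mw, isEmpty_sum, Sum.exists, Sum.elim_inl, Sum.elim_inr]
  rfl

theorem mw_add_snd {G H : PG} : (mw (G + H)).2 ↔ IsEmpty G.RightMoves ∧ IsEmpty H.RightMoves ∨
    (∃ j, ¬ (mw (G.moveRight j + H)).1) ∨ ∃ j, ¬ (mw (G + H.moveRight j)).1 := by
  cases G; cases H
  simp only [mk_add_mk, mw, isEmpty_sum, Sum.exists, Sum.elim_inl, Sum.elim_inr]
  rfl

theorem mw_add_zero (G : PG) : mw (G + 0) = mw G := by
  induction G with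
  | mk α β L R ihL ihR =>
    ext
    · simp [mw_add_fst, moveLeft, LeftMoves, ihL, mw, PEmpty.instIsEmpty]
    · simp [mw_add_snd, moveRight, RightMoves, ihR, mw, PEmpty.instIsEmpty]

theorem mw_zero_add (G : PG) : mw (0 + G) = mw G := by
  induction G with
  | mk α β L R ihL ihR =>
    ext
    · simp [mw_add_fst, moveLeft, LeftMoves, ihL, mw, PEmpty.instIsEmpty]
    · simp [mw_add_snd, moveRight, RightMoves, ihR, mw, PEmpty.instIsEmpty]

theorem mo_add_zero (G : PG) : mo (G + 0) = mo G := by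
  rw [mo, mo, mw_add_zero]

theorem mo_zero_add (G : PG) : mo (0 + G) = mo G := by
  rw [mo, mo, mw_zero_add]

theorem mo_star : mo star = .P :=
  mo_eq_P_iff.2 ⟨by simp [mw, PGame.star], by simp [mw, PGame.star]⟩

theorem mo_add_eq_N_of_left {G H : PG} (i : G.LeftMoves) (j : G.RightMoves)
    (hi : mo (G.moveLeft i + H) = .P) (hj : mo (G.moveRight j + H) = .P) : mo (G + H) = .N :=
  mo_eq_N_iff.2 ⟨mw_add_fst.2 (.inr (.inl ⟨i, (mo_eq_P_iff.1 hi).2⟩)),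
    mw_add_snd.2 (.inr (.inl ⟨j, (mo_eq_P_iff.1 hj).1⟩))⟩

theorem mo_add_eq_N_of_right {G H : PG} (i : H.LeftMoves) (j : H.RightMoves)
    (hi : mo (G + H.moveLeft i) = .P) (hj : mo (G + H.moveRight j) = .P) : mo (G + H) = .N :=
  mo_eq_N_iff.2 ⟨mw_add_fst.2 (.inr (.inr ⟨i, (mo_eq_P_iff.1 hi).2⟩)),
    mw_add_snd.2 (.inr (.inr ⟨j, (mo_eq_P_iff.1 hj).1⟩))⟩

theorem exists_ordSum_moveLeft_eq (G H : PG) (k : G.LeftMoves) :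
    ∃ i, (ordSum G H).moveLeft i = G.moveLeft k := by
  cases H
  exact ⟨Sum.inl k, rfl⟩

theorem exists_ordSum_moveRight_eq (G H : PG) (k : G.RightMoves) :
    ∃ j, (ordSum G H).moveRight j = G.moveRight k := by
  cases H
  exact ⟨Sum.inl k, rfl⟩

theorem mo_ordSum_star_add_star (H : PG) : mo (ordSum star H + star) = .N := by
  obtain ⟨i, hi⟩ := exists_ordSum_moveLeft_eq star H ()
  obtain ⟨j, hj⟩ := exists_ordSum_moveRight_eq star H ()
  apply mo_add_eq_N_of_left i j <;> simp only [hi, hj] <;> exact (mo_zero_add star).trans mo_star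

theorem mo_star_add_ordSum_star (H : PG) : mo (star + ordSum star H) = .N := by
  obtain ⟨i, hi⟩ := exists_ordSum_moveLeft_eq star H ()
  obtain ⟨j, hj⟩ := exists_ordSum_moveRight_eq star H ()
  apply mo_add_eq_N_of_right i j <;> simp only [hi, hj] <;> exact (mo_add_zero star).trans mo_star

theorem dicot_zero : Dicot 0 :=
  ⟨.inl ⟨PEmpty.instIsEmpty, PEmpty.instIsEmpty⟩, nofun, nofun⟩

theorem dicot_star : Dicot star :=
  ⟨.inr ⟨⟨()⟩, ⟨()⟩⟩, fun _ => dicot_zero, fun _ => dicot_zero⟩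

theorem stmt17_general (x : ℚ) :
    (¬ ∀ W : PG, Dicot W → Outcome.le (mo (sprig x + W)) (mo (0 + W))) ∧
    (¬ ∀ W : PG, Dicot W → Outcome.le (mo (0 + W)) (mo (sprig x + W))) ∧
    mo (PGame.star + 0) = Outcome.P ∧
    mo (PGame.star + sprig x) = Outcome.N := by
  have hN : mo (sprig x + star) = .N := mo_ordSum_star_add_star _
  have hP : mo (0 + star) = .P := (mo_zero_add star).trans mo_star
  refine ⟨fun h => ?_, fun h => ?_, (mo_add_zero star).trans mo_star, mo_star_add_ordSum_star _⟩
  · simpa [hN, hP, Outcome.le] using h star dicot_star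
  · simpa [hN, hP, Outcome.le] using h star dicot_star

/-- For a nonzero dyadic rational `x`, `*:x` and `0` are incomparable modulo
the dicot universe; specifically `* + 0 ∈ P⁻` while `* + *:x ∈ N⁻`. -/
theorem stmt17 (x : ℚ) (hx : IsDyadic x) (hx0 : x ≠ 0) :
    (¬ ∀ W : PG, Dicot W → Outcome.le (mo (sprig x + W)) (mo (0 + W))) ∧
    (¬ ∀ W : PG, Dicot W → Outcome.le (mo (0 + W)) (mo (sprig x + W))) ∧
    mo (PGame.star + 0) = Outcome.P ∧
    mo (PGame.star + sprig x) = Outcome.N :=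
  stmt17_general x

end Sprigs
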